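/- Let d_j minimize Σ_j a_j e^{−d_j} subject to Σ_j d_j = C and 0 ≤ d_j ≤ T for all j, where a_1 ≥ a_2 ≥ ... ≥ a_J > 0, 0 < C ≤ J·T. Then the optimal solution is monotone: d̄_1 ≥ d̄_2 ≥ ... ≥ d̄_J. -/
import Mathlib


/-- Any minimizer of `∑ j, a j * exp (-d j)` subject to `∑ j, d j = C`, `0 ≤ d j ≤ T`
with `a` nonincreasing is itself nonincreasing: `j ≤ k → d k ≤ d j`. -/
theorem stmt3 (J : ℕ) (hJ : 1 ≤ J) (T C : ℝ) (hT : 0 < T) (hC : 0 < C)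
    (hCT : C ≤ (J : ℝ) * T)
    (a : Fin J → ℝ) (ha : ∀ j, 0 < a j) (hmono : ∀ j k : Fin J, j ≤ k → a k ≤ a j)
    (d : Fin J → ℝ)
    (hfeas : (∑ j, d j = C) ∧ ∀ j, 0 ≤ d j ∧ d j ≤ T)
    (hmin : ∀ d' : Fin J → ℝ, ((∑ j, d' j = C) ∧ ∀ j, 0 ≤ d' j ∧ d' j ≤ T) →
      ∑ j, a j * Real.exp (-(d j)) ≤ ∑ j, a j * Real.exp (-(d' j))) :
    ∀ j k : Fin J, j ≤ k → d k ≤ d j := by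
  intro j k hjk
  by_contra hlt
  push_neg at hlt
  have hne : j ≠ k := by rintro rfl; exact lt_irrefl _ hlt
  set m : ℝ := (d j + d k) / 2 with hm
  set d' : Fin J → ℝ := Function.update (Function.update d j m) k m with hd'
  have hdj0 := (hfeas.2 j).1
  have hdjT := (hfeas.2 j).2
  have hdk0 := (hfeas.2 k).1
  have hdkT := (hfeas.2 k).2
  have hm0 : 0 ≤ m := by rw [hm]; linarith
  have hmT : m ≤ T := by rw [hm]; linarith
  -- sum over erased set
  have hjmem : j ∈ (Finset.univ.erase k) := Finset.mem_erase.2 ⟨hne, Finset.mem_univ j⟩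
  have hsum : ∀ f : Fin J → ℝ, ∀ b : ℝ,
      ∑ i, Function.update (Function.update f j b) k b i
        = b + (b + ∑ i ∈ (Finset.univ.erase k).erase j, f i) := by
    intro f b
    rw [Finset.sum_update_of_mem (Finset.mem_univ k), ← Finset.erase_eq,
      Finset.sum_update_of_mem hjmem, ← Finset.erase_eq]
  have hsplit : ∀ f : Fin J → ℝ,
      ∑ i, f i = f k + (f j + ∑ i ∈ (Finset.univ.erase k).erase j, f i) := by
    intro f
    rw [← Finset.add_sum_erase _ f (Finset.mem_univ k), ← Finset.add_sum_erase _ f hjmem]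
  -- feasibility of d'
  have hfeas' : (∑ i, d' i = C) ∧ ∀ i, 0 ≤ d' i ∧ d' i ≤ T := by
    constructor
    · rw [hd', hsum d m]
      have := hsplit d
      rw [hfeas.1] at this
      rw [hm]; linarith
    · intro i
      by_cases hik : i = k
      · subst hik; simp [hd', hm0, hmT]
      · by_cases hij : i = j
        · subst hij; simp [hd', Function.update_of_ne hne, hm0, hmT]
        · simp [hd', Function.update_of_ne hik, Function.update_of_ne hij]
          exact hfeas.2 i
  -- rewrite the objective for d'
  have hobj : (fun i => a i * Real.exp (-(d' i)))
      = Function.update (Function.update (fun i => a i * Real.exp (-(d i))) j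
          (a j * Real.exp (-m))) k (a k * Real.exp (-m)) := by
    funext i
    by_cases hik : i = k
    · subst hik; simp [hd']
    · by_cases hij : i = j
      · subst hij
        simp [hd', Function.update_of_ne hne, Function.update_of_ne hik]
      · simp [hd', Function.update_of_ne hik, Function.update_of_ne hij]
  have hmin' := hmin d' hfeas'
  have hsum' : ∑ i, a i * Real.exp (-(d' i))
      = a k * Real.exp (-m) + (a j * Real.exp (-m)
        + ∑ i ∈ (Finset.univ.erase k).erase j, a i * Real.exp (-(d i))) := by
    calc ∑ i, a i * Real.exp (-(d' i))
        = ∑ i, Function.update (Function.update (fun i => a i * Real.exp (-(d i))) j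
            (a j * Real.exp (-m))) k (a k * Real.exp (-m)) i := by rw [← hobj]
      _ = _ := by
          rw [Finset.sum_update_of_mem (Finset.mem_univ k), ← Finset.erase_eq,
            Finset.sum_update_of_mem hjmem, ← Finset.erase_eq]
  have hsplit' := hsplit (fun i => a i * Real.exp (-(d i)))
  rw [hsplit'] at hmin'
  rw [hsum'] at hmin'
  -- derive the key numeric contradiction
  set u : ℝ := Real.exp (-(d j)) with hu
  set v : ℝ := Real.exp (-(d k)) with hv
  set w : ℝ := Real.exp (-m) with hw
  have hupos : 0 < u := Real.exp_pos _
  have hvpos : 0 < v := Real.exp_pos _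
  have hwpos : 0 < w := Real.exp_pos _
  have hvu : v < u := Real.exp_lt_exp.2 (by linarith)
  have hw2 : w ^ 2 = u * v := by
    rw [hu, hv, hw, ← Real.exp_add, sq, ← Real.exp_add]
    congr 1
    rw [hm]; ring
  have hamgm : 2 * w < u + v := by
    nlinarith [sq_nonneg (u - v), sq_nonneg (u + v - 2 * w)]
  have haj := ha j
  have hak := ha k
  have hajk : a k ≤ a j := hmono j k hjk
  have hwu : w < u := Real.exp_lt_exp.2 (by rw [hm]; linarith)
  have hvw : v < w := Real.exp_lt_exp.2 (by rw [hm]; linarith)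
  -- from hmin' : a k * v + (a j * u + S) ≤ a k * w + (a j * w + S)
  have key : a j * u + a k * v ≤ a j * w + a k * w := by linarith
  have h1 : a k * (u - w) ≤ a j * (u - w) :=
    mul_le_mul_of_nonneg_right hajk (by linarith)
  have h2 : 0 < a k * (u + v - 2 * w) := mul_pos hak (by linarith)
  nlinarith [h1, h2, key]
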